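/- Let G : ℝ^m → ℝ be μ-strongly convex (μ > 0) and let S be a real m×m symmetric positive semidefinite matrix. For each y ∈ ℝ^m, the function λ ↦ G(λ) + ⟨y, Sλ⟩ has a unique minimizer λ(y), and the function F(y) := sup_{λ∈ℝ^m} (−G(λ) − ⟨y, Sλ⟩) = −(G(λ(y)) + ⟨y, Sλ(y)⟩) is real-valued, convex, and differentiable with ∇F(y) = −S λ(y). Moreover, the map y ↦ λ(y) is (λmax(S)/μ)-Lipschitz and F is (λmax(S)²/μ)-smooth. -/

import Mathlib

/-!
Strong convexity of `Φ_y(λ) = G λ + ⟪y, S λ⟫` gives quadratic growth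
`Φ_y(λ) ≥ Φ_y(λ(y)) + μ/2 ‖λ - λ(y)‖²` around a minimizer, which exists by coercivity in finite
dimension and is therefore unique. Adding the growth inequalities at `y` and `y'` gives
`μ ‖λ(y) - λ(y')‖² ≤ ⟪y - y', S (λ(y') - λ(y))⟫ ≤ ‖S‖ ‖y - y'‖ ‖λ(y) - λ(y')‖`, the Lipschitz bound.
`F` is a supremum of affine functions of `y`, hence convex. Testing the suprema at `y` and `y'`
with the minimizer of the other point sandwiches `F y' - F y + ⟪y' - y, S λ(y)⟫` between `0` and
`‖S‖²/μ ‖y' - y‖²`, so `F` is differentiable with gradient `-S λ(y)`, and the Lipschitz bound on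
`λ` makes the gradient `‖S‖²/μ`-Lipschitz.
-/

open scoped RealInnerProductSpace
open Matrix

/-- The largest eigenvalue of a (positive semidefinite symmetric) matrix, as the
operator norm of the induced linear map between Euclidean spaces. -/
noncomputable def lambdaMax {m : ℕ} (M : Matrix (Fin m) (Fin m) ℝ) : ℝ :=
  ‖LinearMap.toContinuousLinearMap (Matrix.toEuclideanLin M)‖

open Set Filter Topology

lemma le_of_forall_one_sub_mul_le {a b : ℝ} (h : ∀ t ∈ Ioo (0 : ℝ) 1, (1 - t) * b ≤ a) :
    b ≤ a := by
  have hlim : Tendsto (fun t : ℝ => (1 - t) * b) (𝓝[>] 0) (𝓝 b) := by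
    have : Continuous fun t : ℝ => (1 - t) * b := by fun_prop
    simpa using (this.tendsto 0).mono_left nhdsWithin_le_nhds
  exact le_of_tendsto hlim (eventually_of_mem (Ioo_mem_nhdsGT one_pos) h)

lemma tendsto_half_mul_sq_sub_atTop {μ : ℝ} (hμ : 0 < μ) (K : ℝ) :
    Tendsto (fun r : ℝ => μ / 2 * r ^ 2 - K * (r + 1)) atTop atTop := by
  have h : Tendsto (fun r : ℝ => r * (μ / 2 * r - K) - K) atTop atTop :=
    tendsto_atTop_add_const_right _ _ <| tendsto_id.atTop_mul_atTop₀ <|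
      tendsto_atTop_add_const_right _ _ (tendsto_id.const_mul_atTop (half_pos hμ))
  exact h.congr fun r => by ring

section ConvexOnNormedSpace

variable {E : Type*} [NormedAddCommGroup E] [NormedSpace ℝ E] {g : E → ℝ}

lemma ConvexOn.mul_sub_le_apply_smul (hg : ConvexOn ℝ univ g) {t : ℝ} (ht : 1 ≤ t)
    (u : E) : t * g u - (t - 1) * g 0 ≤ g (t • u) := by
  have ht₀ : 0 < t := by linarith
  have h := hg.2 (mem_univ (t • u)) (mem_univ 0) (inv_nonneg.2 ht₀.le)
    (sub_nonneg.2 (inv_le_one_of_one_le₀ ht)) (by ring)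
  rw [smul_smul, inv_mul_cancel₀ ht₀.ne', one_smul, smul_zero, add_zero, smul_eq_mul,
    smul_eq_mul] at h
  have := mul_le_mul_of_nonneg_left h ht₀.le
  rw [mul_add, ← mul_assoc, mul_inv_cancel₀ ht₀.ne', one_mul, ← mul_assoc, mul_sub,
    mul_inv_cancel₀ ht₀.ne', mul_one] at this
  linarith

lemma ConvexOn.exists_neg_mul_norm_add_one_le [FiniteDimensional ℝ E] (hg : ConvexOn ℝ univ g) :
    ∃ K, ∀ x, -K * (‖x‖ + 1) ≤ g x := by
  obtain ⟨C, hC⟩ := (isCompact_closedBall (0 : E) 1).exists_bound_of_continuousOn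
    ((hg.continuousOn isOpen_univ).mono (subset_univ _))
  have hball : ∀ x, ‖x‖ ≤ 1 → -C ≤ g x := fun x hx =>
    neg_le_of_abs_le (hC x (mem_closedBall_zero_iff.2 hx))
  refine ⟨C + |g 0|, fun x => ?_⟩
  have hC₀ : 0 ≤ C := (abs_nonneg _).trans (hC 0 (Metric.mem_closedBall_self zero_le_one))
  have hg₀ := abs_nonneg (g 0)
  rcases le_or_gt ‖x‖ 1 with hx | hx
  · nlinarith [hball x hx, mul_nonneg (add_nonneg hC₀ hg₀) (norm_nonneg x)]
  · have hx₀ : ‖x‖ ≠ 0 := (one_pos.trans hx).ne'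
    have hu : ‖‖x‖⁻¹ • x‖ ≤ 1 := by rw [norm_smul, norm_inv, norm_norm, inv_mul_cancel₀ hx₀]
    have hray := hg.mul_sub_le_apply_smul hx.le (‖x‖⁻¹ • x)
    rw [smul_smul, mul_inv_cancel₀ hx₀, one_smul] at hray
    nlinarith [mul_le_mul_of_nonneg_left (hball _ hu) (norm_nonneg x),
      mul_le_mul_of_nonneg_left (le_abs_self (g 0)) (sub_nonneg.2 hx.le)]

end ConvexOnNormedSpace

section StrongConvexity

variable {E : Type*} [NormedAddCommGroup E] [InnerProductSpace ℝ E] {μ : ℝ} {f : E → ℝ}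

lemma StrongConvexOn.add_sq_norm_sub_le (hf : StrongConvexOn univ μ f) {x₀ : E}
    (hmin : ∀ x, f x₀ ≤ f x) (x : E) : f x₀ + μ / 2 * ‖x - x₀‖ ^ 2 ≤ f x := by
  suffices μ / 2 * ‖x - x₀‖ ^ 2 ≤ f x - f x₀ by linarith
  refine le_of_forall_one_sub_mul_le fun t ⟨ht₀, ht₁⟩ => ?_
  have hconv := hf.2 (mem_univ x) (mem_univ x₀) ht₀.le (sub_nonneg.2 ht₁.le) (by ring)
  have hle := hmin (t • x + (1 - t) • x₀)
  simp only [smul_eq_mul] at hconv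
  -- divide `t * (1 - t) * (μ / 2 * ‖x - x₀‖²) ≤ t * (f x - f x₀)` by `t > 0`
  nlinarith

lemma StrongConvexOn.exists_forall_le [FiniteDimensional ℝ E] (hf : StrongConvexOn univ μ f)
    (hμ : 0 < μ) : ∃ x₀, ∀ x, f x₀ ≤ f x := by
  have hg := strongConvexOn_iff_convex.1 hf
  obtain ⟨K, hK⟩ := hg.exists_neg_mul_norm_add_one_le
  have hcont : Continuous f := by
    have hg' : Continuous fun x => f x - μ / 2 * ‖x‖ ^ 2 :=
      continuousOn_univ.1 (hg.continuousOn isOpen_univ)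
    convert hg'.add (by fun_prop : Continuous fun x : E => μ / 2 * ‖x‖ ^ 2) using 1
    ext x
    simp
  refine hcont.exists_forall_le (tendsto_atTop_mono (fun x => ?_)
    ((tendsto_half_mul_sq_sub_atTop hμ K).comp tendsto_norm_cocompact_atTop))
  have := hK x
  simp only [Function.comp_apply]
  linarith

end StrongConvexity

lemma convexOn_ciSup {E ι : Type*} [AddCommMonoid E] [Module ℝ E] [Nonempty ι] {s : Set E}
    {f : ι → E → ℝ} (hs : Convex ℝ s) (hf : ∀ i, ConvexOn ℝ s (f i))
    (hbdd : ∀ x ∈ s, BddAbove (range fun i => f i x)) :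
    ConvexOn ℝ s fun x => ⨆ i, f i x := by
  refine ⟨hs, fun x hx y hy a b ha hb hab => ciSup_le fun i => ?_⟩
  simp only [smul_eq_mul]
  calc f i (a • x + b • y) ≤ a * f i x + b * f i y := (hf i).2 hx hy ha hb hab
    _ ≤ a * (⨆ i, f i x) + b * ⨆ i, f i y := by
      gcongr
      exacts [le_ciSup (hbdd x hx) i, le_ciSup (hbdd y hy) i]

section ValueFunction

variable {E V : Type*} [NormedAddCommGroup E] [InnerProductSpace ℝ E] [NormedAddCommGroup V]
  [InnerProductSpace ℝ V] {μ : ℝ} {G : E → ℝ} {A : E →L[ℝ] V} {y y' : V} {lam₀ lam₀' : E}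

def IsPerturbedMin (G : E → ℝ) (A : E →L[ℝ] V) (y : V) (lam₀ : E) : Prop :=
  ∀ lam, G lam₀ + ⟪y, A lam₀⟫ ≤ G lam + ⟪y, A lam⟫

noncomputable def valueFunction (G : E → ℝ) (A : E →L[ℝ] V) (y : V) : ℝ :=
  ⨆ lam, (-G lam - ⟪y, A lam⟫)

lemma StrongConvexOn.add_inner_apply (hG : StrongConvexOn univ μ G) (A : E →L[ℝ] V) (y : V) :
    StrongConvexOn univ μ fun lam => G lam + ⟪y, A lam⟫ := by
  have hlin := ((innerSL ℝ y).comp A).toLinearMap.convexOn convex_univ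
  refine strongConvexOn_iff_convex.2 ((strongConvexOn_iff_convex.1 hG).add hlin |>.congr ?_)
  intro lam _
  simp only [Pi.add_apply, ContinuousLinearMap.coe_coe, ContinuousLinearMap.comp_apply,
    innerSL_apply_apply]
  ring

lemma exists_isPerturbedMin [FiniteDimensional ℝ E] (hμ : 0 < μ) (hG : StrongConvexOn univ μ G)
    (A : E →L[ℝ] V) (y : V) : ∃ lam₀, IsPerturbedMin G A y lam₀ :=
  (hG.add_inner_apply A y).exists_forall_le hμ

lemma ContinuousLinearMap.real_inner_apply_le (A : E →L[ℝ] V) (u : V) (v : E) :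
    ⟪u, A v⟫ ≤ ‖u‖ * (‖A‖ * ‖v‖) :=
  (real_inner_le_norm _ _).trans (mul_le_mul_of_nonneg_left (A.le_opNorm v) (norm_nonneg u))

namespace IsPerturbedMin

lemma add_sq_norm_sub_le (hG : StrongConvexOn univ μ G) (h : IsPerturbedMin G A y lam₀)
    (lam : E) : G lam₀ + ⟪y, A lam₀⟫ + μ / 2 * ‖lam - lam₀‖ ^ 2 ≤ G lam + ⟪y, A lam⟫ :=
  (hG.add_inner_apply A y).add_sq_norm_sub_le h lam

lemma unique (hμ : 0 < μ) (hG : StrongConvexOn univ μ G) (h : IsPerturbedMin G A y lam₀)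
    (h' : IsPerturbedMin G A y lam₀') : lam₀' = lam₀ := by
  have hgrowth := h.add_sq_norm_sub_le hG lam₀'
  have hsq : ‖lam₀' - lam₀‖ ^ 2 ≤ 0 := by nlinarith [h' lam₀]
  simpa [sub_eq_zero] using hsq

lemma norm_sub_le (hμ : 0 < μ) (hG : StrongConvexOn univ μ G) (h : IsPerturbedMin G A y lam₀)
    (h' : IsPerturbedMin G A y' lam₀') : ‖lam₀ - lam₀'‖ ≤ ‖A‖ / μ * ‖y - y'‖ := by
  have hgrowth := h.add_sq_norm_sub_le hG lam₀'
  have hgrowth' := h'.add_sq_norm_sub_le hG lam₀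
  have hcross : μ * ‖lam₀ - lam₀'‖ ^ 2 ≤ ⟪y - y', A (lam₀' - lam₀)⟫ := by
    rw [norm_sub_rev] at hgrowth
    simp only [map_sub, inner_sub_left, inner_sub_right]
    linarith
  have hcs : ⟪y - y', A (lam₀' - lam₀)⟫ ≤ ‖y - y'‖ * (‖A‖ * ‖lam₀ - lam₀'‖) :=
    norm_sub_rev lam₀ lam₀' ▸ A.real_inner_apply_le _ _
  rcases (norm_nonneg (lam₀ - lam₀')).eq_or_lt with hzero | hpos
  · rw [← hzero]
    positivity
  · rw [div_mul_eq_mul_div, le_div_iff₀ hμ]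
    nlinarith

lemma bddAbove (h : IsPerturbedMin G A y lam₀) :
    BddAbove (range fun lam => -G lam - ⟪y, A lam⟫) :=
  ⟨-(G lam₀ + ⟪y, A lam₀⟫), forall_mem_range.2 fun lam => by linarith [h lam]⟩

lemma valueFunction_eq (h : IsPerturbedMin G A y lam₀) :
    valueFunction G A y = -(G lam₀ + ⟪y, A lam₀⟫) :=
  le_antisymm (ciSup_le fun lam => by linarith [h lam]) <|
    (le_ciSup h.bddAbove lam₀).trans_eq' (by ring)

lemma le_valueFunction (h : IsPerturbedMin G A y lam₀) (lam : E) :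
    -G lam - ⟪y, A lam⟫ ≤ valueFunction G A y :=
  le_ciSup h.bddAbove lam

lemma abs_valueFunction_sub_sub_le (hμ : 0 < μ) (hG : StrongConvexOn univ μ G)
    (h : IsPerturbedMin G A y lam₀)
    (h' : IsPerturbedMin G A y' lam₀') :
    |valueFunction G A y' - valueFunction G A y - ⟪-A lam₀, y' - y⟫|
      ≤ ‖A‖ ^ 2 / μ * ‖y' - y‖ ^ 2 := by
  have hlip : ‖lam₀ - lam₀'‖ ≤ ‖A‖ / μ * ‖y' - y‖ := norm_sub_rev y y' ▸ h.norm_sub_le hμ hG h'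
  have hcross : ⟪y' - y, A (lam₀ - lam₀')⟫ ≤ ‖A‖ ^ 2 / μ * ‖y' - y‖ ^ 2 :=
    calc ⟪y' - y, A (lam₀ - lam₀')⟫ ≤ ‖y' - y‖ * (‖A‖ * ‖lam₀ - lam₀'‖) :=
          A.real_inner_apply_le _ _
      _ ≤ ‖y' - y‖ * (‖A‖ * (‖A‖ / μ * ‖y' - y‖)) := by gcongr
      _ = ‖A‖ ^ 2 / μ * ‖y' - y‖ ^ 2 := by ring
  have hbound_nonneg : 0 ≤ ‖A‖ ^ 2 / μ * ‖y' - y‖ ^ 2 := by positivity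
  have hlow := h'.le_valueFunction lam₀
  have hup := h.le_valueFunction lam₀'
  rw [h'.valueFunction_eq] at hlow
  rw [h.valueFunction_eq] at hup
  rw [h'.valueFunction_eq, h.valueFunction_eq, real_inner_comm (y' - y), abs_le]
  simp only [map_sub, inner_sub_left, inner_sub_right, inner_neg_right] at hcross ⊢
  constructor <;> linarith

end IsPerturbedMin

end ValueFunction

section FiniteDimensional

variable {E V : Type*} [NormedAddCommGroup E] [InnerProductSpace ℝ E] [FiniteDimensional ℝ E]
  [NormedAddCommGroup V] [InnerProductSpace ℝ V] {μ : ℝ} {G : E → ℝ} {A : E →L[ℝ] V}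

lemma convexOn_valueFunction (hμ : 0 < μ) (hG : StrongConvexOn univ μ G) :
    ConvexOn ℝ univ (valueFunction G A) := by
  refine convexOn_ciSup convex_univ (fun lam => ?_) fun y _ =>
    (exists_isPerturbedMin hμ hG A y).choose_spec.bddAbove
  refine ((convexOn_const (-G lam) convex_univ).sub
    ((innerSL ℝ (A lam)).toLinearMap.concaveOn convex_univ)).congr fun y _ => ?_
  simp [real_inner_comm]

lemma IsPerturbedMin.hasGradientAt_valueFunction [CompleteSpace V] (hμ : 0 < μ)
    (hG : StrongConvexOn univ μ G) {y : V} {lam₀ : E} (h : IsPerturbedMin G A y lam₀) :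
    HasGradientAt (valueFunction G A) (-A lam₀) y := by
  rw [hasGradientAt_iff_isLittleO]
  refine Asymptotics.IsBigO.trans_isLittleO ?_ (Asymptotics.isLittleO_pow_sub_sub y one_lt_two)
  refine Asymptotics.IsBigO.of_bound (‖A‖ ^ 2 / μ) (Eventually.of_forall fun y' => ?_)
  obtain ⟨lam₀', h'⟩ := exists_isPerturbedMin hμ hG A y'
  simpa only [Real.norm_eq_abs, norm_pow, abs_norm] using h.abs_valueFunction_sub_sub_le hμ hG h'

lemma norm_gradient_valueFunction_sub_le [CompleteSpace V] (hμ : 0 < μ)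
    (hG : StrongConvexOn univ μ G) (y y' : V) :
    ‖gradient (valueFunction G A) y - gradient (valueFunction G A) y'‖
      ≤ ‖A‖ ^ 2 / μ * ‖y - y'‖ := by
  obtain ⟨lam₀, h⟩ := exists_isPerturbedMin hμ hG A y
  obtain ⟨lam₀', h'⟩ := exists_isPerturbedMin hμ hG A y'
  rw [(h.hasGradientAt_valueFunction hμ hG).gradient,
    (h'.hasGradientAt_valueFunction hμ hG).gradient, neg_sub_neg, ← map_sub]
  calc ‖A (lam₀' - lam₀)‖ ≤ ‖A‖ * ‖lam₀' - lam₀‖ := A.le_opNorm _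
    _ ≤ ‖A‖ * (‖A‖ / μ * ‖y' - y‖) := by gcongr; exact h'.norm_sub_le hμ hG h
    _ = ‖A‖ ^ 2 / μ * ‖y - y'‖ := by rw [norm_sub_rev y']; ring

end FiniteDimensional

theorem stmt4_general {m : ℕ} (μ : ℝ) (hμ : 0 < μ)
    (G : EuclideanSpace ℝ (Fin m) → ℝ)
    (hG : ConvexOn ℝ Set.univ (fun lam => G lam - μ / 2 * ‖lam‖ ^ 2))
    (S : Matrix (Fin m) (Fin m) ℝ)
    (F : EuclideanSpace ℝ (Fin m) → ℝ)
    (hF : ∀ y, F y = ⨆ lam : EuclideanSpace ℝ (Fin m),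
      (-G lam - ⟪y, Matrix.toEuclideanLin S lam⟫)) :
    -- unique minimizer of `λ ↦ G(λ) + ⟪y, S λ⟫`
    (∀ y : EuclideanSpace ℝ (Fin m), ∃! lam₀ : EuclideanSpace ℝ (Fin m),
        ∀ lam, G lam₀ + ⟪y, Matrix.toEuclideanLin S lam₀⟫
          ≤ G lam + ⟪y, Matrix.toEuclideanLin S lam⟫) ∧
    -- real-valued: the supremand is bounded above, and the sup equals the value at λ(y)
    (∀ y : EuclideanSpace ℝ (Fin m), BddAbove (Set.range
        fun lam : EuclideanSpace ℝ (Fin m) => -G lam - ⟪y, Matrix.toEuclideanLin S lam⟫)) ∧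
    (∀ y lam₀,
        (∀ lam, G lam₀ + ⟪y, Matrix.toEuclideanLin S lam₀⟫
          ≤ G lam + ⟪y, Matrix.toEuclideanLin S lam⟫) →
        F y = -(G lam₀ + ⟪y, Matrix.toEuclideanLin S lam₀⟫)) ∧
    ConvexOn ℝ Set.univ F ∧
    Differentiable ℝ F ∧
    -- gradient formula `∇F(y) = −S λ(y)`
    (∀ y lam₀,
        (∀ lam, G lam₀ + ⟪y, Matrix.toEuclideanLin S lam₀⟫
          ≤ G lam + ⟪y, Matrix.toEuclideanLin S lam⟫) →
        gradient F y = -(Matrix.toEuclideanLin S lam₀)) ∧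
    -- `y ↦ λ(y)` is `(λmax(S)/μ)`-Lipschitz
    (∀ y y' lam₀ lam₀',
        (∀ lam, G lam₀ + ⟪y, Matrix.toEuclideanLin S lam₀⟫
          ≤ G lam + ⟪y, Matrix.toEuclideanLin S lam⟫) →
        (∀ lam, G lam₀' + ⟪y', Matrix.toEuclideanLin S lam₀'⟫
          ≤ G lam + ⟪y', Matrix.toEuclideanLin S lam⟫) →
        ‖lam₀ - lam₀'‖ ≤ lambdaMax S / μ * ‖y - y'‖) ∧
    -- `F` is `(λmax(S)²/μ)`-smooth
    (∀ y y' : EuclideanSpace ℝ (Fin m),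
        ‖gradient F y - gradient F y'‖ ≤ lambdaMax S ^ 2 / μ * ‖y - y'‖) := by
  set A := LinearMap.toContinuousLinearMap (Matrix.toEuclideanLin S)
  have hG' : StrongConvexOn univ μ G := strongConvexOn_iff_convex.2 hG
  obtain rfl : F = valueFunction G A := funext hF
  have hmin := exists_isPerturbedMin hμ hG' A
  refine ⟨fun y => ?_, fun y => (hmin y).choose_spec.bddAbove,
    fun y lam₀ (h : IsPerturbedMin G A y lam₀) => h.valueFunction_eq,
    convexOn_valueFunction hμ hG',
    fun y => ((hmin y).choose_spec.hasGradientAt_valueFunction hμ hG').differentiableAt,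
    fun y lam₀ (h : IsPerturbedMin G A y lam₀) =>
      (h.hasGradientAt_valueFunction hμ hG').gradient,
    fun y y' lam₀ lam₀' (h : IsPerturbedMin G A y lam₀) h' => h.norm_sub_le hμ hG' h',
    norm_gradient_valueFunction_sub_le hμ hG'⟩
  obtain ⟨lam₀, h⟩ := hmin y
  exact ⟨lam₀, h, fun lam₁ h₁ => h.unique hμ hG' h₁⟩

/-- Let `G : ℝ^m → ℝ` be `μ`-strongly convex (`μ > 0`) and `S` a symmetric positive
semidefinite `m × m` matrix.  Then for each `y` the function `λ ↦ G(λ) + ⟪y, S λ⟫` has a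
unique minimizer `λ(y)`, and `F(y) = sup_λ (−G(λ) − ⟪y, S λ⟫) = −(G(λ(y)) + ⟪y, S λ(y)⟫)`
is real-valued, convex, and differentiable with `∇F(y) = −S λ(y)`.  Moreover `y ↦ λ(y)`
is `(λmax(S)/μ)`-Lipschitz and `F` is `(λmax(S)²/μ)`-smooth. -/
theorem stmt4 {m : ℕ} (μ : ℝ) (hμ : 0 < μ)
    (G : EuclideanSpace ℝ (Fin m) → ℝ)
    (hG : ConvexOn ℝ Set.univ (fun lam => G lam - μ / 2 * ‖lam‖ ^ 2))
    (S : Matrix (Fin m) (Fin m) ℝ) (hSsymm : S.IsSymm) (hSpsd : S.PosSemidef)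
    (F : EuclideanSpace ℝ (Fin m) → ℝ)
    (hF : ∀ y, F y = ⨆ lam : EuclideanSpace ℝ (Fin m),
      (-G lam - ⟪y, Matrix.toEuclideanLin S lam⟫)) :
    -- unique minimizer of `λ ↦ G(λ) + ⟪y, S λ⟫`
    (∀ y : EuclideanSpace ℝ (Fin m), ∃! lam₀ : EuclideanSpace ℝ (Fin m),
        ∀ lam, G lam₀ + ⟪y, Matrix.toEuclideanLin S lam₀⟫
          ≤ G lam + ⟪y, Matrix.toEuclideanLin S lam⟫) ∧
    -- real-valued: the supremand is bounded above, and the sup equals the value at λ(y)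
    (∀ y : EuclideanSpace ℝ (Fin m), BddAbove (Set.range
        fun lam : EuclideanSpace ℝ (Fin m) => -G lam - ⟪y, Matrix.toEuclideanLin S lam⟫)) ∧
    (∀ y lam₀,
        (∀ lam, G lam₀ + ⟪y, Matrix.toEuclideanLin S lam₀⟫
          ≤ G lam + ⟪y, Matrix.toEuclideanLin S lam⟫) →
        F y = -(G lam₀ + ⟪y, Matrix.toEuclideanLin S lam₀⟫)) ∧
    ConvexOn ℝ Set.univ F ∧
    Differentiable ℝ F ∧
    -- gradient formula `∇F(y) = −S λ(y)`
    (∀ y lam₀,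
        (∀ lam, G lam₀ + ⟪y, Matrix.toEuclideanLin S lam₀⟫
          ≤ G lam + ⟪y, Matrix.toEuclideanLin S lam⟫) →
        gradient F y = -(Matrix.toEuclideanLin S lam₀)) ∧
    -- `y ↦ λ(y)` is `(λmax(S)/μ)`-Lipschitz
    (∀ y y' lam₀ lam₀',
        (∀ lam, G lam₀ + ⟪y, Matrix.toEuclideanLin S lam₀⟫
          ≤ G lam + ⟪y, Matrix.toEuclideanLin S lam⟫) →
        (∀ lam, G lam₀' + ⟪y', Matrix.toEuclideanLin S lam₀'⟫
          ≤ G lam + ⟪y', Matrix.toEuclideanLin S lam⟫) →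
        ‖lam₀ - lam₀'‖ ≤ lambdaMax S / μ * ‖y - y'‖) ∧
    -- `F` is `(λmax(S)²/μ)`-smooth
    (∀ y y' : EuclideanSpace ℝ (Fin m),
        ‖gradient F y - gradient F y'‖ ≤ lambdaMax S ^ 2 / μ * ‖y - y'‖) :=
  stmt4_general μ hμ G hG S F hF
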